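/- Fix b ∈ {0,1}. Consider the CRN with species x^T, x^F, y^T, y^F and the (2,0) rules x^T + y^T → ∅ and x^F + y^F → ∅. Let the initial configuration contain m ≥ 1 copies of x^T if b = 1 or m ≥ 1 copies of x^F if b = 0 (and zero copies of the complementary input species), together with exactly one copy of y^T and one copy of y^F. Then every terminal configuration reachable from this initial configuration contains exactly one copy of the output species representing ¬b (y^F if b = 1, y^T if b = 0) and zero copies of the output species representing b. Hence this CRN computes the NOT gate. -/
import Mathlib


/-! ### Chemical Reaction Networks (CRNs) and step CRNs -/

/-- A reaction rule: an ordered pair of multisets (reactants, products). -/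
structure Rule (Λ : Type) where
  reactants : Multiset Λ
  products : Multiset Λ
deriving DecidableEq

namespace Rule

/-- A `(2,0)` void rule: exactly two reactants and no products. -/
def IsVoid20 {Λ : Type} (R : Rule Λ) : Prop :=
  Multiset.card R.reactants = 2 ∧ R.products = 0

/-- A `(2,1)` catalytic rule: two reactants, one product which is one of the reactants. -/
def IsCat21 {Λ : Type} (R : Rule Λ) : Prop :=
  Multiset.card R.reactants = 2 ∧ Multiset.card R.products = 1 ∧ R.products ≤ R.reactants

/-- A void rule: the products form a strict submultiset of the reactants. -/
def IsVoid {Λ : Type} (R : Rule Λ) : Prop := R.products < R.reactants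

end Rule

/-- A single rule application: some rule of `Γ` is applicable to `C` and transforms it to `C'`. -/
def RStep {Λ : Type} [DecidableEq Λ] (Γ : Finset (Rule Λ)) (C C' : Multiset Λ) : Prop :=
  ∃ R ∈ Γ, R.reactants ≤ C ∧ C' = C - R.reactants + R.products

/-- Reachability: the reflexive-transitive closure of single rule application. -/
def Reaches {Λ : Type} [DecidableEq Λ] (Γ : Finset (Rule Λ)) : Multiset Λ → Multiset Λ → Prop :=
  Relation.ReflTransGen (RStep Γ)

/-- A configuration is terminal if no rule of `Γ` is applicable to it. -/
def Terminal {Λ : Type} (Γ : Finset (Rule Λ)) (C : Multiset Λ) : Prop :=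
  ∀ R ∈ Γ, ¬ R.reactants ≤ C

/-- The set of terminal configurations reachable from `S` after adding `s` (one step). -/
def stepTerm {Λ : Type} [DecidableEq Λ] (Γ : Finset (Rule Λ)) (S : Set (Multiset Λ)) (s : Multiset Λ) :
    Set (Multiset Λ) :=
  {T | ∃ c ∈ S, Reaches Γ (c + s) T ∧ Terminal Γ T}

/-- `TERM_k`: terminal configurations after running the step CRN with step sequence `ss`. -/
def termAfter {Λ : Type} [DecidableEq Λ] (Γ : Finset (Rule Λ)) (ss : List (Multiset Λ)) : Set (Multiset Λ) :=
  ss.foldl (stepTerm Γ) {0}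

/-- All configurations reachable during any step, starting from terminal sets `S`. -/
def reachDuring {Λ : Type} [DecidableEq Λ] (Γ : Finset (Rule Λ)) :
    Set (Multiset Λ) → List (Multiset Λ) → Set (Multiset Λ)
  | _, [] => ∅
  | S, s :: rest =>
      {C | ∃ c ∈ S, Reaches Γ (c + s) C} ∪ reachDuring Γ (stepTerm Γ S s) rest

/-- All configurations reachable at any step of the step CRN `(Γ, ss)`. -/
def reachAll {Λ : Type} [DecidableEq Λ] (Γ : Finset (Rule Λ)) (ss : List (Multiset Λ)) : Set (Multiset Λ) :=
  reachDuring Γ {0} ss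

/-- Add the input configuration `X` to the first step of the step sequence. -/
def addToHead {Λ : Type} (X : Multiset Λ) : List (Multiset Λ) → List (Multiset Λ)
  | [] => [X]
  | s :: rest => (X + s) :: rest

/-- Species for the NOT gate gadget. -/
inductive SpNOT : Type
  | xT
  | xF
  | yT
  | yF
deriving DecidableEq

/-- The `(2,0)` rules `x^T + y^T → ∅` and `x^F + y^F → ∅`. -/
def notRules : Finset (Rule SpNOT) :=
  {⟨{SpNOT.xT, SpNOT.yT}, 0⟩, ⟨{SpNOT.xF, SpNOT.yF}, 0⟩}


/-- Invariant for the NOT gate CRN. -/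
def InvNOT (b : Bool) (m : ℕ) (C : Multiset SpNOT) : Prop :=
  C.count (if b then SpNOT.xF else SpNOT.xT) = 0 ∧
  C.count (if b then SpNOT.yF else SpNOT.yT) = 1 ∧
  ((C.count (if b then SpNOT.yT else SpNOT.yF) = 1 ∧
    C.count (if b then SpNOT.xT else SpNOT.xF) = m) ∨
   (C.count (if b then SpNOT.yT else SpNOT.yF) = 0 ∧
    C.count (if b then SpNOT.xT else SpNOT.xF) = m - 1))

lemma invNOT_step (b : Bool) (m : ℕ) {C C' : Multiset SpNOT}
    (h : InvNOT b m C) (hs : RStep notRules C C') : InvNOT b m C' := by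
  obtain ⟨R, hR, hle, rfl⟩ := hs
  have hR' : R = ⟨{SpNOT.xT, SpNOT.yT}, 0⟩ ∨ R = ⟨{SpNOT.xF, SpNOT.yF}, 0⟩ := by
    simpa [notRules] using hR
  obtain ⟨h0, h1, h2⟩ := h
  have hcount : ∀ a : SpNOT, Multiset.count a R.reactants ≤ Multiset.count a C :=
    fun a => Multiset.count_le_of_le a hle
  cases b <;> rcases hR' with rfl | rfl
  · -- b = false, rule xT+yT : inapplicable since count xT = 0
    exfalso
    have := hcount SpNOT.xT
    simp at this h0
    exact h0 (Multiset.count_pos.mp this)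
  · -- b = false, rule xF+yF : applicable
    rcases h2 with ⟨hy, hx⟩ | ⟨hy, hx⟩
    · refine ⟨?_, ?_, Or.inr ⟨?_, ?_⟩⟩ <;>
        simp_all [InvNOT, Multiset.count_sub]
    · exfalso
      have := hcount SpNOT.yF
      simp at this hy
      exact hy (Multiset.count_pos.mp this)
  · -- b = true, rule xT+yT : applicable
    rcases h2 with ⟨hy, hx⟩ | ⟨hy, hx⟩
    · refine ⟨?_, ?_, Or.inr ⟨?_, ?_⟩⟩ <;>
        simp_all [InvNOT, Multiset.count_sub]
    · exfalso
      have := hcount SpNOT.yT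
      simp at this hy
      exact hy (Multiset.count_pos.mp this)
  · -- b = true, rule xF+yF : inapplicable
    exfalso
    have := hcount SpNOT.xF
    simp at this h0
    exact h0 (Multiset.count_pos.mp this)

/-- The `(2,0)`-rule CRN above computes the NOT gate: starting from `m ≥ 1`
copies of the input species for bit `b` plus one copy each of `y^T` and `y^F`, every reachable
terminal configuration contains exactly one copy of the output species for `¬b` and zero
copies of the output species for `b`. -/
theorem stmt8 (b : Bool) (m : ℕ) (hm : 1 ≤ m) :
    ∀ T : Multiset SpNOT,
      Reaches notRules
        (m • ({if b then SpNOT.xT else SpNOT.xF} : Multiset SpNOT)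
          + {SpNOT.yT} + {SpNOT.yF}) T →
      Terminal notRules T →
      T.count (if b then SpNOT.yF else SpNOT.yT) = 1 ∧
      T.count (if b then SpNOT.yT else SpNOT.yF) = 0 := by
  intro T hreach hterm
  have hinv : InvNOT b m T := by
    have h0 : InvNOT b m
        (m • ({if b then SpNOT.xT else SpNOT.xF} : Multiset SpNOT)
          + {SpNOT.yT} + {SpNOT.yF}) := by
      cases b <;> exact ⟨by simp, by simp, Or.inl ⟨by simp, by simp⟩⟩
    clear hterm
    induction hreach with
    | refl => exact h0
    | tail _ hstep ih => exact invNOT_step b m ih hstep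
  obtain ⟨hx0, hy1, h2⟩ := hinv
  rcases h2 with ⟨hy, hx⟩ | ⟨hy, hx⟩
  · exfalso
    cases b
    · exact hterm ⟨{SpNOT.xF, SpNOT.yF}, 0⟩ (by simp [notRules])
        (by rw [Multiset.le_iff_count]; intro a; cases a <;> simp_all)
    · exact hterm ⟨{SpNOT.xT, SpNOT.yT}, 0⟩ (by simp [notRules])
        (by rw [Multiset.le_iff_count]; intro a; cases a <;> simp_all)
  · exact ⟨hy1, hy⟩
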